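/- arXiv:2407.06969 — 2 statements merged into one kernel-verified Lean document; each statement's English description precedes it below -/
import Mathlib

section
/- Suppose there exists r > 0 such that for every x ∈ K there exists x₀ ∈ K with x ∈ closed ball B̄(x₀, r) ⊆ K. Then the distance function d_K(x) = inf_{y∈K} ‖y - x‖ satisfies the semiconcavity estimate d_K(x+z) + d_K(x−z) − 2 d_K(x) ≤ (2/r)‖z‖² for all x, z ∈ ℝ^d with x, x+z, x−z outside the interior of K. -/
open Metric

/-- If a closed ball of radius `r` around `x₀` is contained in `K` and `w` is at distance
at least `r` from `x₀`, then `infDist w K ≤ dist w x₀ - r`. -/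
lemma infDist_le_dist_sub_of_closedBall_subset
    {E : Type*} [NormedAddCommGroup E] [NormedSpace ℝ E]
    (x₀ w : E) (r : ℝ) (hr : 0 < r) (h : r ≤ dist w x₀)
    (K : Set E) (hsub : closedBall x₀ r ⊆ K) :
    infDist w K ≤ dist w x₀ - r := by
  set a := dist w x₀ with ha
  have ha0 : 0 < a := lt_of_lt_of_le hr h
  set p := x₀ + (r / a) • (w - x₀) with hp
  have hpK : p ∈ K := by
    apply hsub
    rw [mem_closedBall, dist_eq_norm]
    have : p - x₀ = (r / a) • (w - x₀) := by rw [hp]; abel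
    rw [this, norm_smul, Real.norm_eq_abs, abs_of_pos (div_pos hr ha0)]
    rw [← dist_eq_norm, ← ha]
    rw [div_mul_cancel₀ _ ha0.ne']
  calc infDist w K ≤ dist w p := infDist_le_dist_of_mem hpK
    _ = a - r := by
        rw [dist_eq_norm]
        have hwp : w - p = (1 - r / a) • (w - x₀) := by
          rw [hp, sub_smul, one_smul]; abel
        rw [hwp, norm_smul, Real.norm_eq_abs]
        have h1 : r / a ≤ 1 := (div_le_one ha0).mpr h
        rw [abs_of_nonneg (by linarith), ← dist_eq_norm, ← ha]
        field_simp

/-- Interior ball condition of radius `r` implies the semiconcavity estimate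
`d_K(x+z) + d_K(x−z) − 2 d_K(x) ≤ (2/r)‖z‖²` outside the interior of `K`. -/
theorem distance_semiconcave_of_interior_ball
    {d : ℕ} (K : Set (EuclideanSpace ℝ (Fin d))) (hK : IsCompact K)
    (hKint : (interior K).Nonempty)
    (r : ℝ) (hr : 0 < r)
    (hball : ∀ x ∈ K, ∃ x₀ ∈ K, x ∈ closedBall x₀ r ∧ closedBall x₀ r ⊆ K) :
    ∀ x z : EuclideanSpace ℝ (Fin d),
      x ∉ interior K → x + z ∉ interior K → x - z ∉ interior K →
      infDist (x + z) K + infDist (x - z) K - 2 * infDist x K ≤ (2 / r) * ‖z‖ ^ 2 := by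
  intro x z hx hxz hxz'
  have hKne : K.Nonempty := hKint.mono interior_subset
  obtain ⟨y, hyK, hdy⟩ := hK.exists_infDist_eq_dist hKne x
  obtain ⟨x₀, hx₀K, hyball, hsub⟩ := hball y hyK
  have hball_int : ball x₀ r ⊆ interior K :=
    interior_maximal (ball_subset_closedBall.trans hsub) isOpen_ball
  have hfar : ∀ w : EuclideanSpace ℝ (Fin d), w ∉ interior K → r ≤ dist w x₀ := by
    intro w hw
    by_contra h
    exact hw (hball_int (mem_ball.mpr (lt_of_not_ge h)))
  set a := dist (x + z) x₀ with hadef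
  set b := dist (x - z) x₀ with hbdef
  set c := dist x x₀ with hcdef
  set s := ‖z‖ with hsdef
  have hra : r ≤ a := hfar _ hxz
  have hrb : r ≤ b := hfar _ hxz'
  have hrc : r ≤ c := hfar _ hx
  have hc0 : 0 < c := lt_of_lt_of_le hr hrc
  have hs0 : 0 ≤ s := norm_nonneg z
  -- upper bounds for infDist at x ± z
  have hA : infDist (x + z) K ≤ a - r :=
    infDist_le_dist_sub_of_closedBall_subset x₀ (x + z) r hr hra K hsub
  have hB : infDist (x - z) K ≤ b - r :=
    infDist_le_dist_sub_of_closedBall_subset x₀ (x - z) r hr hrb K hsub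
  -- lower bound for infDist at x
  have hC : c - r ≤ infDist x K := by
    have h1 : c ≤ dist x y + dist y x₀ := dist_triangle x y x₀
    have h2 : dist y x₀ ≤ r := mem_closedBall.mp hyball
    rw [hdy]; linarith
  -- parallelogram law
  have ea : a = ‖(x - x₀) + z‖ := by rw [hadef, dist_eq_norm]; congr 1; abel
  have eb : b = ‖(x - x₀) - z‖ := by rw [hbdef, dist_eq_norm]; congr 1; abel
  have ec : c = ‖x - x₀‖ := by rw [hcdef, dist_eq_norm]
  have hpar : a * a + b * b = 2 * (c * c + s * s) := by
    rw [ea, eb, ec, hsdef]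
    simpa only [sq] using parallelogram_law_with_norm ℝ (x - x₀) z
  -- key algebraic inequality: a + b - 2c ≤ s²/c
  have hkey : a + b - 2 * c ≤ s ^ 2 / c := by
    rw [le_div_iff₀ hc0]
    nlinarith [sq_nonneg (a - b), sq_nonneg (a + b - 2 * c), hc0.le, hs0]
  have hdiv : s ^ 2 / c ≤ (2 / r) * s ^ 2 := by
    have h1 : s ^ 2 / c ≤ s ^ 2 / r := by gcongr

    have h2 : s ^ 2 / r ≤ (2 / r) * s ^ 2 := by
      rw [div_mul_eq_mul_div]
      gcongr
      nlinarith [sq_nonneg s]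
    linarith
  linarith
end

section
/- Let φ : ℝ^d → ℝ be a bounded function such that φ(x+z) − 2φ(x) + φ(x−z) ≤ C‖z‖² for all x,z (midpoint semiconcavity with constant C), and suppose φ(0) = 0 and limsup_{‖x‖→0} φ(x)/‖x‖ ≤ 0. Then φ(x) ≤ (C/2)‖x‖² for all x ∈ ℝ^d. -/
/-!
By the parallelogram law, `ψ x = φ x - (C/2)‖x‖²` has nonpositive second differences, so its
increments along the ray `k ↦ k • y` are nonincreasing and telescoping gives `ψ (n • y) ≤ n ψ y`.
Taking `y = x / n` yields `ψ x ≤ n ψ (x/n) ≤ n φ (x/n)`, and the first-order condition at the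
origin makes `n φ (x/n)` eventually smaller than any `ε > 0`.
-/

open Filter Finset

def MidpointConcave {G : Type*} [AddCommGroup G] (ψ : G → ℝ) : Prop :=
  ∀ x z : G, ψ (x + z) - 2 * ψ x + ψ (x - z) ≤ 0

theorem midpointConcave_sub_half_mul_norm_sq {E : Type*} [NormedAddCommGroup E]
    [InnerProductSpace ℝ E] {φ : E → ℝ} {C : ℝ}
    (hsc : ∀ x z : E, φ (x + z) - 2 * φ x + φ (x - z) ≤ C * ‖z‖ ^ 2) :
    MidpointConcave fun y ↦ φ y - C / 2 * ‖y‖ ^ 2 := fun x z ↦ by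
  beta_reduce
  linear_combination hsc x z - C / 2 * parallelogram_law_with_norm ℝ x z

theorem MidpointConcave.le_natCast_mul {G : Type*} [AddCommGroup G] {ψ : G → ℝ}
    (hψ : MidpointConcave ψ) (hψ0 : ψ 0 = 0) (n : ℕ) (y : G) :
    ψ (n • y) ≤ n * ψ y := by
  set D : ℕ → ℝ := fun k ↦ ψ ((k + 1) • y) - ψ (k • y)
  have hD : Antitone D := antitone_nat_of_succ_le fun k ↦ by
    have := hψ ((k + 1) • y) y
    rw [← succ_nsmul, show (k + 1) • y - y = k • y by rw [succ_nsmul, add_sub_cancel_right]]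
      at this
    simp only [D]
    linarith
  calc ψ (n • y) = ∑ k ∈ range n, D k := by
        rw [sum_range_sub (fun k ↦ ψ (k • y)), zero_nsmul, hψ0, sub_zero]
    _ ≤ n * D 0 := by
        simpa using sum_le_card_nsmul (range n) D (D 0) fun k _ ↦ hD k.zero_le
    _ = n * ψ y := by simp [D, hψ0]

theorem eventually_natCast_mul_le_of_limsup_div_norm_nonpos {E : Type*} [NormedAddCommGroup E]
    [NormedSpace ℝ E] {φ : E → ℝ}
    (hlimsup : ∀ ε > (0 : ℝ), ∃ δ > (0 : ℝ), ∀ x : E, 0 < ‖x‖ → ‖x‖ < δ → φ x / ‖x‖ ≤ ε)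
    {x : E} (hx : x ≠ 0) {ε : ℝ} (hε : 0 < ε) :
    ∀ᶠ n : ℕ in atTop, n * φ ((n : ℝ)⁻¹ • x) ≤ ε := by
  have hx' : 0 < ‖x‖ := norm_pos_iff.mpr hx
  obtain ⟨δ, hδ, hφ⟩ := hlimsup (ε / ‖x‖) (by positivity)
  have hsmall : ∀ᶠ n : ℕ in atTop, (n : ℝ)⁻¹ * ‖x‖ < δ :=
    ((tendsto_inv_atTop_zero.comp tendsto_natCast_atTop_atTop).mul_const ‖x‖).eventually
      (gt_mem_nhds (by simpa using hδ))
  filter_upwards [hsmall, eventually_gt_atTop 0] with n hn hn0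
  have hn0' : (0 : ℝ) < n := by exact_mod_cast hn0
  have hnorm : ‖(n : ℝ)⁻¹ • x‖ = (n : ℝ)⁻¹ * ‖x‖ := by
    rw [norm_smul, Real.norm_of_nonneg (by positivity)]
  have hφn := hφ _ (by rw [hnorm]; positivity) (by rwa [hnorm])
  rw [hnorm, div_le_iff₀ (by positivity)] at hφn
  calc (n : ℝ) * φ ((n : ℝ)⁻¹ • x) ≤ n * (ε / ‖x‖ * ((n : ℝ)⁻¹ * ‖x‖)) := by gcongr
    _ = ε := by field_simp

theorem semiconcave_quadratic_upper_bound_general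
    {d : ℕ} (φ : EuclideanSpace ℝ (Fin d) → ℝ) (C : ℝ) (hC : 0 ≤ C)
    (hsc : ∀ x z : EuclideanSpace ℝ (Fin d), φ (x + z) - 2 * φ x + φ (x - z) ≤ C * ‖z‖ ^ 2)
    (h0 : φ 0 = 0)
    (hlimsup : ∀ ε > (0 : ℝ), ∃ δ > (0 : ℝ),
      ∀ x : EuclideanSpace ℝ (Fin d), 0 < ‖x‖ → ‖x‖ < δ → φ x / ‖x‖ ≤ ε) :
    ∀ x : EuclideanSpace ℝ (Fin d), φ x ≤ C / 2 * ‖x‖ ^ 2 := by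
  intro x
  rcases eq_or_ne x 0 with rfl | hx
  · simp [h0]
  refine le_of_forall_pos_le_add fun ε hε ↦ ?_
  obtain ⟨n, hn, hn1⟩ := ((eventually_natCast_mul_le_of_limsup_div_norm_nonpos hlimsup hx hε).and
    (eventually_ge_atTop 1)).exists
  set y := (n : ℝ)⁻¹ • x
  have hxy : n • y = x := by
    rw [← Nat.cast_smul_eq_nsmul ℝ, smul_inv_smul₀ (by positivity)]
  have hψ := (midpointConcave_sub_half_mul_norm_sq hsc).le_natCast_mul (by simp [h0]) n y
  rw [hxy] at hψ
  have : 0 ≤ (n : ℝ) * (C / 2 * ‖y‖ ^ 2) := by positivity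
  linarith

/-- If `φ` is bounded, midpoint-semiconcave with constant `C`, vanishes at the origin and
satisfies `limsup_{‖x‖→0} φ(x)/‖x‖ ≤ 0`, then `φ(x) ≤ (C/2)‖x‖²` everywhere. -/
theorem semiconcave_quadratic_upper_bound
    {d : ℕ} (φ : EuclideanSpace ℝ (Fin d) → ℝ) (C : ℝ) (hC : 0 ≤ C)
    (hbdd : ∃ M, ∀ x, |φ x| ≤ M)
    (hsc : ∀ x z : EuclideanSpace ℝ (Fin d), φ (x + z) - 2 * φ x + φ (x - z) ≤ C * ‖z‖ ^ 2)
    (h0 : φ 0 = 0)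
    (hlimsup : ∀ ε > (0 : ℝ), ∃ δ > (0 : ℝ),
      ∀ x : EuclideanSpace ℝ (Fin d), 0 < ‖x‖ → ‖x‖ < δ → φ x / ‖x‖ ≤ ε) :
    ∀ x : EuclideanSpace ℝ (Fin d), φ x ≤ C / 2 * ‖x‖ ^ 2 :=
  semiconcave_quadratic_upper_bound_general φ C hC hsc h0 hlimsup
end
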